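/- arXiv:2502.07266 — 3 statements merged into one kernel-verified Lean document; each statement's English description precedes it below -/
import Mathlib

section
/- Let T, M, C be positive reals with 0 < T/C < 0.9, and set x₀ = (√(T(C−T)) + T)/M. Then F(x₀) < 0, where F(x) = ln(1 − T/(Mx)) + (T/(Mx))/(1 − T/(Mx)) + ln(1 − T/C). -/
/-! With `s = √(T (C - T))` and `u = T / s` one has `M x₀ = s + T` and `u² = T / (C - T)`, so
`1 - T / (M x₀) = 1 / (1 + u)` and `1 - T / C = 1 / (1 + u²)`; the expression becomes
`u - log (1 + u) - log (1 + u²)`, and `T / C < 0.9` means `u < 3`. Its negativity is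
`exp u < (1 + u) (1 + u²)`, which follows from `exp v ≤ 1 + v + v²` on `[0, 1]` applied to
`v = u / 3`. -/

open Real

lemma exp_le_one_add_add_sq {v : ℝ} (hv0 : 0 ≤ v) (hv1 : v ≤ 1) : exp v ≤ 1 + v + v ^ 2 := by
  have h := abs_exp_sub_one_sub_id_le (abs_le.mpr ⟨by linarith, hv1⟩)
  linarith [le_abs_self (exp v - 1 - v)]

lemma exp_lt_one_add_mul_one_add_sq {u : ℝ} (hu0 : 0 < u) (hu3 : u ≤ 3) :
    exp u < (1 + u) * (1 + u ^ 2) := by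
  set v := u / 3 with hv
  have hv0 : 0 < v := by positivity
  have hv1 : v ≤ 1 := by linarith
  have hu : u = 3 * v := by linarith
  calc exp u = exp v ^ 3 := by rw [← exp_nat_mul, hu]; norm_num
    _ ≤ (1 + v + v ^ 2) ^ 3 := by gcongr; exact exp_le_one_add_add_sq hv0.le hv1
    _ < (1 + u) * (1 + u ^ 2) := by
      rw [hu]
      nlinarith [pow_pos hv0 2, pow_pos hv0 3, pow_le_one₀ hv0.le hv1 (n := 2),
        pow_le_one₀ hv0.le hv1 (n := 3)]

lemma lt_log_one_add_add_log_one_add_sq {u : ℝ} (hu0 : 0 < u) (hu3 : u ≤ 3) :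
    u < log (1 + u) + log (1 + u ^ 2) := by
  rw [← log_mul (by positivity) (by positivity), lt_log_iff_exp_lt (by positivity)]
  exact exp_lt_one_add_mul_one_add_sq hu0 hu3

lemma log_one_sub_div_add_div_one_sub_div {s T : ℝ} (hs : 0 < s) (hT : 0 < T) :
    log (1 - T / (s + T)) + T / (s + T) / (1 - T / (s + T)) = T / s - log (1 + T / s) := by
  have hsub : 1 - T / (s + T) = (1 + T / s)⁻¹ := by field_simp; ring
  have hratio : T / (s + T) / (1 - T / (s + T)) = T / s := by
    rw [hsub]; field_simp
  rw [hratio, hsub, log_inv]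
  ring

lemma one_add_sq_div_eq_inv_one_sub_div {s T C : ℝ} (hs : s ^ 2 = T * (C - T))
    (hC : C ≠ 0) (hCT : C - T ≠ 0) : 1 + (T / s) ^ 2 = (1 - T / C)⁻¹ := by
  rw [div_pow, hs]
  field_simp
  ring

theorem test_point (T M C : ℝ) (hT : 0 < T) (hM : 0 < M) (hC : 0 < C)
    (hTC : T / C < 0.9) :
    let x₀ := (Real.sqrt (T * (C - T)) + T) / M
    Real.log (1 - T / (M * x₀)) + (T / (M * x₀)) / (1 - T / (M * x₀)) +
      Real.log (1 - T / C) < 0 := by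
  intro x₀
  have hT9 : T < 0.9 * C := (div_lt_iff₀ hC).mp hTC
  have hprod : 0 < T * (C - T) := mul_pos hT (by linarith)
  set s := √(T * (C - T))
  have hs0 : 0 < s := sqrt_pos.mpr hprod
  have hs : s ^ 2 = T * (C - T) := sq_sqrt hprod.le
  have hMx : M * x₀ = s + T := mul_div_cancel₀ _ hM.ne'
  have hlogC : log (1 - T / C) = -log (1 + (T / s) ^ 2) := by
    rw [one_add_sq_div_eq_inv_one_sub_div hs hC.ne' (by linarith), log_inv, neg_neg]
  have hu3 : T / s ≤ 3 := by
    have hsq : (T / s) ^ 2 ≤ 3 ^ 2 := by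
      rw [div_pow, hs, div_le_iff₀ hprod]
      nlinarith
    exact abs_le_of_sq_le_sq' hsq (by norm_num) |>.2
  rw [hMx, log_one_sub_div_add_div_one_sub_div hs0 hT, hlogC]
  linarith [lt_log_one_add_add_log_one_add_sq (div_pos hT hs0) hu3]
end

section
/- Let t* (M, T) = M(1 + 1/Z) where Z = W₋₁(−(1−T/C)/e) for fixed C > 0 and T ∈ (0, C). Then t* is strictly increasing in T. -/
open Real Set

lemma aux_strictAnti : StrictAntiOn (fun z : ℝ => z * Real.exp z) (Set.Iic (-1)) := by
  apply strictAntiOn_of_deriv_neg (convex_Iic _)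
  · exact (continuous_id.mul Real.continuous_exp).continuousOn
  · intro x hx
    rw [interior_Iic] at hx
    have hd : HasDerivAt (fun z : ℝ => z * Real.exp z) (1 * Real.exp x + x * Real.exp x) x :=
      (hasDerivAt_id x).mul (Real.hasDerivAt_exp x)
    rw [hd.deriv]
    have hx' : x < -1 := hx
    nlinarith [Real.exp_pos x]

/-- `t*(T) = M(1 + 1/Z(T))`, with `Z(T) = W₋₁(−(1−T/C)/e)` characterized by its
defining equation on the lower branch, is strictly increasing in `T` on `(0, C)`. -/
theorem optimal_step_mono_in_T (M C : ℝ) (hM : 0 < M) (hC : 0 < C)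
    (Z : ℝ → ℝ)
    (hZ : ∀ T ∈ Set.Ioo (0:ℝ) C, Z T < -1 ∧
      Z T * Real.exp (Z T) = -((1 - T / C) / Real.exp 1)) :
    StrictMonoOn (fun T : ℝ => M * (1 + 1 / Z T)) (Set.Ioo 0 C) := by
  intro T1 h1 T2 h2 hlt
  obtain ⟨hZ1, hE1⟩ := hZ T1 h1
  obtain ⟨hZ2, hE2⟩ := hZ T2 h2
  have he : (0:ℝ) < Real.exp 1 := Real.exp_pos 1
  have hRHS : -((1 - T1 / C) / Real.exp 1) < -((1 - T2 / C) / Real.exp 1) := by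
    have h : T1 / C < T2 / C := div_lt_div_of_pos_right hlt hC
    have : (1 - T2 / C) / Real.exp 1 < (1 - T1 / C) / Real.exp 1 :=
      div_lt_div_of_pos_right (by linarith) he
    linarith
  have hfZ : Z T1 * Real.exp (Z T1) < Z T2 * Real.exp (Z T2) := by
    rw [hE1, hE2]; exact hRHS
  -- hence Z T2 < Z T1 since z * exp z is strictly anti on Iic (-1)
  have hZord : Z T2 < Z T1 := by
    by_contra hcon
    push_neg at hcon
    rcases eq_or_lt_of_le hcon with heq | hltZ
    · rw [heq] at hfZ; exact lt_irrefl _ hfZ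
    · have := aux_strictAnti (le_of_lt hZ1) (le_of_lt hZ2) hltZ
      simp only at this
      linarith
  have hZ1n : Z T1 < 0 := by linarith
  have hZ2n : Z T2 < 0 := by linarith
  have : 1 / Z T1 < 1 / Z T2 := by
    exact (one_div_lt_one_div_of_neg hZ1n hZ2n).mpr hZord
  simp only
  nlinarith [this]
end

section
/- Let N, T, C, M be positive reals with T < C and T < NM, and let e₁,...,e_N, σ₁,...,σ_N be random variables valued in [0,1] with eᵢ ~ Beta(T, NM−T) and σᵢ ~ Beta(T, C−T) (not necessarily independent). Then E[∏ᵢ(1−eᵢ)(1−σᵢ)] ≤ [(1 − T/(C+2N−1))·(1 − T/(NM+2N−1))]^N. -/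
open Real MeasureTheory Set Finset

/-- The Beta(a,b) measure on `(0,1)`, given by its normalized density. -/
noncomputable def betaMeasure (a b : ℝ) : Measure ℝ :=
  (volume.restrict (Set.Ioo (0:ℝ) 1)).withDensity fun x =>
    ENNReal.ofReal (x ^ (a - 1) * (1 - x) ^ (b - 1) /
      (∫ y in Set.Ioo (0:ℝ) 1, y ^ (a - 1) * (1 - y) ^ (b - 1)))

open scoped ENNReal NNReal


noncomputable def betaInt (a b : ℝ) : ℝ :=
  ∫ y in Set.Ioo (0:ℝ) 1, y ^ (a - 1) * (1 - y) ^ (b - 1)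

lemma betaInt_eq (a b : ℝ) (ha : 0 < a) (hb : 0 < b) :
    betaInt a b = Real.Gamma a * Real.Gamma b / Real.Gamma (a + b) := by
  have key : Complex.betaIntegral a b = (betaInt a b : ℂ) := by
    rw [Complex.betaIntegral]
    rw [intervalIntegral.integral_of_le zero_le_one]
    rw [MeasureTheory.integral_Ioc_eq_integral_Ioo]
    have hcast := integral_ofReal (𝕜 := ℂ)
      (f := fun y : ℝ => y ^ (a - 1) * (1 - y) ^ (b - 1))
      (μ := volume.restrict (Set.Ioo (0:ℝ) 1))
    have hcast' : (∫ x in Set.Ioo (0:ℝ) 1, Complex.ofReal (x ^ (a-1) * (1-x) ^ (b-1)))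
        = Complex.ofReal (∫ x in Set.Ioo (0:ℝ) 1, x ^ (a-1) * (1-x) ^ (b-1)) := hcast
    rw [betaInt, ← hcast']
    refine setIntegral_congr_fun measurableSet_Ioo (fun x hx => ?_)
    obtain ⟨hx0, hx1⟩ := hx
    push_cast
    rw [Complex.ofReal_cpow hx0.le, Complex.ofReal_cpow (by linarith)]
    push_cast
    ring
  have h := Complex.Gamma_mul_Gamma_eq_betaIntegral
    (s := (a:ℂ)) (t := (b:ℂ)) (by simpa using ha) (by simpa using hb)
  rw [key] at h
  have h2 : ((Real.Gamma a * Real.Gamma b : ℝ) : ℂ)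
      = ((Real.Gamma (a+b) * betaInt a b : ℝ) : ℂ) := by
    push_cast
    rw [← Complex.Gamma_ofReal, ← Complex.Gamma_ofReal, ← Complex.Gamma_ofReal]
    push_cast at h ⊢
    rw [h]
  have h3 := Complex.ofReal_inj.mp h2
  have hG : Real.Gamma (a+b) ≠ 0 := (Real.Gamma_pos_of_pos (by linarith)).ne'
  field_simp at h3 ⊢
  linarith [h3]

lemma betaInt_pos (a b : ℝ) (ha : 0 < a) (hb : 0 < b) : 0 < betaInt a b := by
  rw [betaInt_eq a b ha hb]
  exact div_pos (mul_pos (Real.Gamma_pos_of_pos ha) (Real.Gamma_pos_of_pos hb))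
    (Real.Gamma_pos_of_pos (by linarith))

lemma Gamma_add_nat (b : ℝ) (hb : 0 < b) (n : ℕ) :
    Real.Gamma (b + n) = (∏ k ∈ Finset.range n, (b + k)) * Real.Gamma b := by
  induction n with
  | zero => simp
  | succ m ih =>
    have h1 : b + (m + 1 : ℕ) = (b + m) + 1 := by push_cast; ring
    rw [h1, Real.Gamma_add_one (by positivity), ih, Finset.prod_range_succ]
    ring

lemma betaInt_add_nat (a b : ℝ) (ha : 0 < a) (hb : 0 < b) (n : ℕ) :
    betaInt a (b + n) = (∏ k ∈ Finset.range n, (b + k) / (a + b + k)) * betaInt a b := by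
  rw [betaInt_eq a b ha hb, betaInt_eq a (b + n) ha (by positivity)]
  have h1 : a + (b + n) = (a + b) + n := by ring
  rw [h1, Gamma_add_nat b hb n, Gamma_add_nat (a + b) (by linarith) n]
  have hprod : ∀ k ∈ Finset.range n, (0:ℝ) < a + b + k := fun k _ => by positivity
  have hP : (0:ℝ) < ∏ k ∈ Finset.range n, (a + b + k) := Finset.prod_pos hprod
  have hGab : (0:ℝ) < Real.Gamma (a + b) := Real.Gamma_pos_of_pos (by linarith)
  have hGb : (0:ℝ) < Real.Gamma b := Real.Gamma_pos_of_pos hb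
  rw [Finset.prod_div_distrib]
  field_simp

lemma betaInt_ratio_le (a b : ℝ) (ha : 0 < a) (hb : 0 < b) (n : ℕ) (hn : 0 < n) :
    betaInt a (b + n) ≤ (1 - a / (a + b + n - 1)) ^ n * betaInt a b := by
  have hD : (0:ℝ) < a + b + n - 1 := by
    have : (1:ℝ) ≤ n := by exact_mod_cast hn
    linarith
  have hc : 1 - a / (a + b + n - 1) = (b + n - 1) / (a + b + n - 1) := by
    field_simp
    ring
  rw [betaInt_add_nat a b ha hb n, hc]
  have hB := betaInt_pos a b ha hb
  refine mul_le_mul_of_nonneg_right ?_ hB.le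
  calc ∏ k ∈ Finset.range n, (b + k) / (a + b + k)
      ≤ ∏ _k ∈ Finset.range n, (b + n - 1) / (a + b + n - 1) := by
        refine Finset.prod_le_prod (fun k _ => by positivity) (fun k hk => ?_)
        have hk' : (k:ℝ) ≤ (n:ℝ) - 1 := by
          have := Finset.mem_range.mp hk
          have : (k:ℝ) + 1 ≤ (n:ℝ) := by exact_mod_cast this
          linarith
        rw [div_le_div_iff₀ (by positivity) hD]
        nlinarith
    _ = ((b + n - 1) / (a + b + n - 1)) ^ n := by
        rw [Finset.prod_const, Finset.card_range]

lemma beta_moment_eq (a b : ℝ) (ha : 0 < a) (hb : 0 < b) (n : ℕ) :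
    ∫ x, (1 - x) ^ n ∂(betaMeasure a b) = betaInt a (b + n) / betaInt a b := by
  have hB := betaInt_pos a b ha hb
  set d : ℝ → ℝ := fun x => x ^ (a - 1) * (1 - x) ^ (b - 1) / betaInt a b with hd
  have hdmeas : Measurable fun x => (d x).toNNReal := by
    apply Measurable.real_toNNReal
    apply Measurable.div_const
    fun_prop
  have hmeq : betaMeasure a b
      = (volume.restrict (Set.Ioo (0:ℝ) 1)).withDensity
        (fun x => ((d x).toNNReal : ℝ≥0∞)) := rfl
  rw [hmeq, integral_withDensity_eq_integral_smul hdmeas]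
  have : ∫ x in Set.Ioo (0:ℝ) 1, (d x).toNNReal • (1 - x) ^ n
      = ∫ x in Set.Ioo (0:ℝ) 1, x ^ (a - 1) * (1 - x) ^ (b + n - 1) / betaInt a b := by
    refine setIntegral_congr_fun measurableSet_Ioo (fun x hx => ?_)
    obtain ⟨hx0, hx1⟩ := hx
    have h1x : (0:ℝ) < 1 - x := by linarith
    have hdnn : 0 ≤ d x := by
      rw [hd]
      positivity
    rw [NNReal.smul_def, smul_eq_mul, Real.coe_toNNReal _ hdnn, hd]
    simp only []
    rw [← Real.rpow_natCast (1 - x) n, div_mul_eq_mul_div, mul_assoc,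
      ← Real.rpow_add h1x]
    ring_nf
  rw [this, integral_div]
  rfl

lemma beta_moment_le (a b : ℝ) (ha : 0 < a) (hb : 0 < b) (n : ℕ) (hn : 0 < n) :
    ∫ x, (1 - x) ^ n ∂(betaMeasure a b) ≤ (1 - a / (a + b + n - 1)) ^ n := by
  rw [beta_moment_eq a b ha hb n]
  have hB := betaInt_pos a b ha hb
  rw [div_le_iff₀ hB]
  exact betaInt_ratio_le a b ha hb n hn

lemma amgm_prod (N : ℕ) (hN : 0 < N) (u v : Fin N → ℝ)
    (hu : ∀ i, 0 ≤ u i) (hv : ∀ i, 0 ≤ v i) :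
    (∏ i, u i) * (∏ i, v i) ≤ (∑ i, u i ^ (2*N) + ∑ i, v i ^ (2*N)) / (2*N) := by
  have h2N : (0:ℝ) < 2*N := by positivity
  have hpow : ∀ x : ℝ, 0 ≤ x → (x ^ (2*N)) ^ ((1:ℝ)/(2*N)) = x := by
    intro x hx
    rw [← Real.rpow_natCast x (2*N), ← Real.rpow_mul hx]
    rw [show ((2*N : ℕ) : ℝ) * ((1:ℝ)/(2*N)) = 1 by push_cast; field_simp]
    exact Real.rpow_one x
  have key := Real.geom_mean_le_arith_mean_weighted Finset.univ
    (fun _ : Fin N ⊕ Fin N => 1/(2*N : ℝ))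
    (Sum.elim (fun i => u i ^ (2*N)) (fun i => v i ^ (2*N)))
    (fun i _ => by positivity)
    (by
      rw [Finset.sum_const, Finset.card_univ, Fintype.card_sum, Fintype.card_fin,
        nsmul_eq_mul]
      push_cast
      field_simp
      ring)
    (fun i _ => by cases i with
      | inl j => simp only [Sum.elim_inl]; exact pow_nonneg (hu j) _
      | inr j => simp only [Sum.elim_inr]; exact pow_nonneg (hv j) _)
  rw [Fintype.prod_sum_type, Fintype.sum_sum_type] at key
  simp only [Sum.elim_inl, Sum.elim_inr] at key
  calc (∏ i, u i) * (∏ i, v i)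
      = (∏ i, (u i ^ (2*N)) ^ ((1:ℝ)/(2*N))) * ∏ i, (v i ^ (2*N)) ^ ((1:ℝ)/(2*N)) := by
        congr 1
        · exact Finset.prod_congr rfl (fun i _ => (hpow (u i) (hu i)).symm)
        · exact Finset.prod_congr rfl (fun i _ => (hpow (v i) (hv i)).symm)
    _ ≤ ∑ i, (1/(2*N:ℝ)) * u i ^ (2*N) + ∑ i, (1/(2*N:ℝ)) * v i ^ (2*N) := key
    _ = (∑ i, u i ^ (2*N) + ∑ i, v i ^ (2*N)) / (2*N) := by
        rw [← Finset.mul_sum, ← Finset.mul_sum]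
        field_simp

/-- Stochastic-error accuracy bound: for (not necessarily independent) per-step
errors `eᵢ ~ Beta(T, NM−T)` and `σᵢ ~ Beta(T, C−T)`,
`E[∏ᵢ(1−eᵢ)(1−σᵢ)] ≤ [(1 − T/(C+2N−1))(1 − T/(NM+2N−1))]^N`. -/
theorem stochastic_error_bound (N : ℕ) (hN : 0 < N) (T C M : ℝ)
    (hT : 0 < T) (hTC : T < C) (hTNM : T < N * M)
    {Ω : Type*} [MeasureSpace Ω] (μ : Measure Ω) [IsProbabilityMeasure μ]
    (e s : Fin N → Ω → ℝ)
    (he_meas : ∀ i, Measurable (e i)) (hs_meas : ∀ i, Measurable (s i))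
    (he01 : ∀ i ω, e i ω ∈ Set.Icc (0:ℝ) 1) (hs01 : ∀ i ω, s i ω ∈ Set.Icc (0:ℝ) 1)
    (he_law : ∀ i, μ.map (e i) = betaMeasure T (N * M - T))
    (hs_law : ∀ i, μ.map (s i) = betaMeasure T (C - T)) :
    (∫ ω, ∏ i : Fin N, (1 - e i ω) * (1 - s i ω) ∂μ) ≤
      ((1 - T / (C + 2 * N - 1)) * (1 - T / (N * M + 2 * N - 1))) ^ N := by

  have hN1 : (1:ℝ) ≤ N := by exact_mod_cast hN
  set p : ℝ := 1 - T / (C + 2 * N - 1) with hp_def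
  set q : ℝ := 1 - T / ((N:ℝ) * M + 2 * N - 1) with hq_def
  have hDC : (0:ℝ) < C + 2 * N - 1 := by linarith
  have hDN : (0:ℝ) < (N:ℝ) * M + 2 * N - 1 := by linarith
  have hp : 0 < p := by
    rw [hp_def, sub_pos]
    exact (div_lt_one hDC).mpr (by linarith)
  have hq : 0 < q := by
    rw [hq_def, sub_pos]
    exact (div_lt_one hDN).mpr (by linarith)
  have h2N : 0 < 2 * N := by omega
  -- moment bounds
  have hEe : ∀ i, ∫ ω, (1 - e i ω) ^ (2 * N) ∂μ ≤ q ^ (2 * N) := by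
    intro i
    have hmg : Measurable fun x : ℝ => (1 - x) ^ (2 * N) := by fun_prop
    have hmap := integral_map (μ := μ) (φ := e i) (he_meas i).aemeasurable
      (f := fun x => (1 - x) ^ (2 * N))
      (by rw [he_law i]; exact hmg.aestronglyMeasurable)
    rw [← hmap, he_law i]
    have hb : (0:ℝ) < (N:ℝ) * M - T := by linarith
    have := beta_moment_le T ((N:ℝ) * M - T) hT hb (2 * N) h2N
    have heq : (1 - T / (T + ((N:ℝ) * M - T) + (2 * N : ℕ) - 1)) = q := by
      rw [hq_def]; push_cast; ring_nf
    rwa [heq] at this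
  have hEs : ∀ i, ∫ ω, (1 - s i ω) ^ (2 * N) ∂μ ≤ p ^ (2 * N) := by
    intro i
    have hmg : Measurable fun x : ℝ => (1 - x) ^ (2 * N) := by fun_prop
    have hmap := integral_map (μ := μ) (φ := s i) (hs_meas i).aemeasurable
      (f := fun x => (1 - x) ^ (2 * N))
      (by rw [hs_law i]; exact hmg.aestronglyMeasurable)
    rw [← hmap, hs_law i]
    have hb : (0:ℝ) < C - T := by linarith
    have := beta_moment_le T (C - T) hT hb (2 * N) h2N
    have heq : (1 - T / (T + (C - T) + (2 * N : ℕ) - 1)) = p := by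
      rw [hp_def]; push_cast; ring_nf
    rwa [heq] at this
  -- pointwise bound
  set F : Fin N → Ω → ℝ := fun i ω => ((1 - e i ω) / q) ^ (2 * N) with hF_def
  set H : Fin N → Ω → ℝ := fun i ω => ((1 - s i ω) / p) ^ (2 * N) with hH_def
  have hpt : ∀ ω, ∏ i : Fin N, (1 - e i ω) * (1 - s i ω) ≤
      q ^ N * p ^ N * ((∑ i, F i ω + ∑ i, H i ω) / (2 * N)) := by
    intro ω
    have h1 : ∀ i, 0 ≤ (1 - e i ω) / q :=
      fun i => div_nonneg (by linarith [(he01 i ω).2]) hq.le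
    have h2 : ∀ i, 0 ≤ (1 - s i ω) / p :=
      fun i => div_nonneg (by linarith [(hs01 i ω).2]) hp.le
    have key := amgm_prod N hN (fun i => (1 - e i ω) / q) (fun i => (1 - s i ω) / p) h1 h2
    have e1 : ∏ i : Fin N, ((1 - e i ω) / q) = (∏ i : Fin N, (1 - e i ω)) / q ^ N := by
      rw [Finset.prod_div_distrib, Finset.prod_const, Finset.card_univ, Fintype.card_fin]
    have e2 : ∏ i : Fin N, ((1 - s i ω) / p) = (∏ i : Fin N, (1 - s i ω)) / p ^ N := by
      rw [Finset.prod_div_distrib, Finset.prod_const, Finset.card_univ, Fintype.card_fin]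
    calc ∏ i : Fin N, (1 - e i ω) * (1 - s i ω)
        = (∏ i : Fin N, (1 - e i ω)) * ∏ i : Fin N, (1 - s i ω) := Finset.prod_mul_distrib
      _ = q ^ N * p ^ N * ((∏ i : Fin N, ((1 - e i ω) / q)) * ∏ i : Fin N, ((1 - s i ω) / p)) := by
          rw [e1, e2]; field_simp
      _ ≤ q ^ N * p ^ N * ((∑ i, F i ω + ∑ i, H i ω) / (2 * N)) := by
          refine mul_le_mul_of_nonneg_left ?_ (by positivity)
          exact key
  -- integrability
  have hFi : ∀ i, Integrable (F i) μ := by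
    intro i
    refine Integrable.mono' (integrable_const ((1 / q) ^ (2 * N))) ?_ ?_
    · exact (((measurable_const.sub (he_meas i)).div_const q).pow_const _).aestronglyMeasurable
    · filter_upwards with ω
      have h0 : 0 ≤ (1 - e i ω) / q := div_nonneg (by linarith [(he01 i ω).2]) hq.le
      have hle : (1 - e i ω) / q ≤ 1 / q := by
        gcongr
        linarith [(he01 i ω).1]
      rw [Real.norm_eq_abs, abs_of_nonneg (pow_nonneg h0 _)]
      exact pow_le_pow_left₀ h0 hle _
  have hHi : ∀ i, Integrable (H i) μ := by
    intro i
    refine Integrable.mono' (integrable_const ((1 / p) ^ (2 * N))) ?_ ?_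
    · exact (((measurable_const.sub (hs_meas i)).div_const p).pow_const _).aestronglyMeasurable
    · filter_upwards with ω
      have h0 : 0 ≤ (1 - s i ω) / p := div_nonneg (by linarith [(hs01 i ω).2]) hp.le
      have hle : (1 - s i ω) / p ≤ 1 / p := by
        gcongr
        linarith [(hs01 i ω).1]
      rw [Real.norm_eq_abs, abs_of_nonneg (pow_nonneg h0 _)]
      exact pow_le_pow_left₀ h0 hle _
  have hProdInt : Integrable (fun ω => ∏ i : Fin N, (1 - e i ω) * (1 - s i ω)) μ := by
    refine Integrable.mono' (integrable_const 1) ?_ ?_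
    · exact (Finset.measurable_prod Finset.univ (fun i _ =>
        (measurable_const.sub (he_meas i)).mul
          (measurable_const.sub (hs_meas i)))).aestronglyMeasurable
    · filter_upwards with ω
      have hnn : ∀ i ∈ Finset.univ, (0:ℝ) ≤ (1 - e i ω) * (1 - s i ω) := fun i _ =>
        mul_nonneg (by linarith [(he01 i ω).2]) (by linarith [(hs01 i ω).2])
      rw [Real.norm_eq_abs, abs_of_nonneg (Finset.prod_nonneg hnn)]
      refine Finset.prod_le_one hnn (fun i _ => ?_)
      have := (he01 i ω).1
      have := (hs01 i ω).1
      nlinarith [(he01 i ω).2, (hs01 i ω).2]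
  have hSum : Integrable (fun ω => (∑ i, F i ω + ∑ i, H i ω) / (2 * N)) μ :=
    (((integrable_finset_sum Finset.univ (fun i _ => hFi i)).add
      (integrable_finset_sum Finset.univ (fun i _ => hHi i))).div_const _)
  have hG : Integrable (fun ω => q ^ N * p ^ N * ((∑ i, F i ω + ∑ i, H i ω) / (2 * N))) μ :=
    hSum.const_mul _
  -- integrate
  have step1 := integral_mono hProdInt hG hpt
  have hFle : ∀ i, ∫ ω, F i ω ∂μ ≤ 1 := by
    intro i
    have hrw : F i = fun ω => (1 - e i ω) ^ (2 * N) / q ^ (2 * N) := by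
      funext ω; rw [hF_def]; exact div_pow _ _ _
    rw [hrw, integral_div, div_le_one (by positivity)]
    exact hEe i
  have hHle : ∀ i, ∫ ω, H i ω ∂μ ≤ 1 := by
    intro i
    have hrw : H i = fun ω => (1 - s i ω) ^ (2 * N) / p ^ (2 * N) := by
      funext ω; rw [hH_def]; exact div_pow _ _ _
    rw [hrw, integral_div, div_le_one (by positivity)]
    exact hEs i
  have step2 : ∫ ω, q ^ N * p ^ N * ((∑ i, F i ω + ∑ i, H i ω) / (2 * N)) ∂μ
      ≤ q ^ N * p ^ N := by
    rw [integral_const_mul]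
    have : ∫ ω, (∑ i, F i ω + ∑ i, H i ω) / (2 * N) ∂μ ≤ 1 := by
      rw [integral_div, integral_add (integrable_finset_sum _ (fun i _ => hFi i))
        (integrable_finset_sum _ (fun i _ => hHi i)),
        integral_finset_sum _ (fun i _ => hFi i), integral_finset_sum _ (fun i _ => hHi i)]
      rw [div_le_one (by positivity)]
      have hs1 : ∑ i : Fin N, ∫ ω, F i ω ∂μ ≤ (N:ℝ) := by
        calc ∑ i : Fin N, ∫ ω, F i ω ∂μ ≤ ∑ _i : Fin N, (1:ℝ) :=
              Finset.sum_le_sum (fun i _ => hFle i)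
          _ = N := by simp
      have hs2 : ∑ i : Fin N, ∫ ω, H i ω ∂μ ≤ (N:ℝ) := by
        calc ∑ i : Fin N, ∫ ω, H i ω ∂μ ≤ ∑ _i : Fin N, (1:ℝ) :=
              Finset.sum_le_sum (fun i _ => hHle i)
          _ = N := by simp
      push_cast
      linarith
    calc q ^ N * p ^ N * ∫ ω, (∑ i, F i ω + ∑ i, H i ω) / (2 * N) ∂μ
        ≤ q ^ N * p ^ N * 1 := mul_le_mul_of_nonneg_left this (by positivity)
      _ = q ^ N * p ^ N := mul_one _
  calc (∫ ω, ∏ i : Fin N, (1 - e i ω) * (1 - s i ω) ∂μ)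
      ≤ q ^ N * p ^ N := le_trans step1 step2
    _ = (p * q) ^ N := by rw [mul_pow]; ring
end
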